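/- (Schmitt–Vogel lemma) Let R be a commutative ring and P a finite subset of R. Suppose P_0, …, P_r are subsets of P with ⋃_{l=0}^r P_l = P, P_0 has exactly one element, and for every l with 0 < l ≤ r and every pair of distinct elements p, p'' ∈ P_l there exist l' < l and p' ∈ P_{l'} with p·p'' ∈ (p'). For each p ∈ P_l fix an integer e(p) ≥ 1 and set q_l = Σ_{p ∈ P_l} p^{e(p)}. Then √(P) = √(q_0, …, q_r). -/
import Mathlib


/-- **Schmitt–Vogel lemma.** Let `P` be a finite subset of a commutative ring `R`,
and `P₀, …, P_r` subsets of `P` whose union is `P`, with `P₀` a singleton, such that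
for `0 < l` and distinct `p, p'' ∈ P_l` there are `l' < l` and `p' ∈ P_{l'}` with
`p * p'' ∈ (p')`.  For integers `e p ≥ 1` set `q_l = ∑_{p ∈ P_l} p ^ (e p)`.
Then `√(P) = √(q₀, …, q_r)`. -/
theorem schmitt_vogel {R : Type*} [CommRing R] [DecidableEq R] (r : ℕ) (P : Finset R)
    (Pl : Fin (r + 1) → Finset R)
    (hunion : Finset.univ.biUnion Pl = P)
    (hP0 : (Pl 0).card = 1)
    (hdiv : ∀ l : Fin (r + 1), 0 < l → ∀ p ∈ Pl l, ∀ p'' ∈ Pl l, p ≠ p'' →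
      ∃ l' : Fin (r + 1), l' < l ∧ ∃ p' ∈ Pl l', p * p'' ∈ Ideal.span {p'})
    (e : R → ℕ) (he : ∀ p ∈ P, 1 ≤ e p)
    (q : Fin (r + 1) → R) (hq : ∀ l, q l = ∑ p ∈ Pl l, p ^ (e p)) :
    (Ideal.span (P : Set R)).radical = (Ideal.span (Set.range q)).radical := by
  set I : Ideal R := Ideal.span (Set.range q) with hI
  set J : Ideal R := I.radical with hJ
  have hPmem : ∀ l : Fin (r + 1), ∀ p ∈ Pl l, p ∈ P := by
    intro l p hp
    rw [← hunion]
    exact Finset.mem_biUnion.mpr ⟨l, Finset.mem_univ _, hp⟩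
  have hJq : ∀ l, q l ∈ J := fun l =>
    Ideal.le_radical (Ideal.subset_span ⟨l, rfl⟩)
  have hJrad : J.radical = J := Ideal.radical_idem I
  -- key claim: every p ∈ Pl l lies in J
  have key : ∀ n : ℕ, ∀ l : Fin (r + 1), (l : ℕ) = n → ∀ p ∈ Pl l, p ∈ J := by
    intro n
    induction n using Nat.strong_induction_on with
    | _ n ih =>
      intro l hl p hp
      by_cases h0 : l = 0
      · subst h0
        obtain ⟨a, ha⟩ := Finset.card_eq_one.mp hP0
        rw [ha, Finset.mem_singleton] at hp
        subst hp
        have hq0 : q 0 = p ^ (e p) := by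
          rw [hq 0, ha, Finset.sum_singleton]
        have : p ^ (e p) ∈ I := hq0 ▸ Ideal.subset_span ⟨0, rfl⟩
        exact ⟨e p, this⟩
      · have hlpos : 0 < l := Fin.pos_iff_ne_zero.mpr h0
        set N : ℕ := ∑ x ∈ Pl l, e x with hN
        have hterm : ∀ p'' ∈ Pl l, p'' ≠ p → p ^ N * p'' ^ (e p'') ∈ J := by
          intro p'' hp'' hne
          obtain ⟨l', hl', p', hp', hmem⟩ := hdiv l hlpos p hp p'' hp'' hne.symm
          have hl'n : (l' : ℕ) < n := hl ▸ hl'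
          have hp'J : p' ∈ J := ih l' hl'n l' rfl p' hp'
          have hppJ : p * p'' ∈ J := by
            obtain ⟨c, hc⟩ := Ideal.mem_span_singleton'.mp hmem
            rw [← hc]
            exact J.mul_mem_left c hp'J
          have hle : e p'' ≤ N := Finset.single_le_sum (fun _ _ => Nat.zero_le _) hp''
          have he'' : 1 ≤ e p'' := he p'' (hPmem l p'' hp'')
          have heq : p ^ N * p'' ^ (e p'') = p ^ (N - e p'') * ((p * p'') ^ (e p'' - 1) * (p * p'')) := by
            rw [← pow_succ, Nat.sub_add_cancel he'', mul_pow, ← mul_assoc, ← pow_add,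
              Nat.sub_add_cancel hle]
          rw [heq]
          exact J.mul_mem_left _ (J.mul_mem_left _ hppJ)
        have h1 : p ^ N * q l ∈ J := J.mul_mem_left _ (hJq l)
        have h2 : (∑ p'' ∈ (Pl l).erase p, p ^ N * p'' ^ (e p'')) ∈ J :=
          Ideal.sum_mem _ fun x hx =>
            hterm x (Finset.mem_of_mem_erase hx) (Finset.ne_of_mem_erase hx)
        have hsplit : p ^ N * q l = p ^ (N + e p) + ∑ p'' ∈ (Pl l).erase p, p ^ N * p'' ^ (e p'') := by
          rw [hq l, Finset.mul_sum, ← Finset.add_sum_erase _ _ hp, pow_add]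
        have hpow : p ^ (N + e p) ∈ J := by
          have : p ^ (N + e p) = p ^ N * q l - ∑ p'' ∈ (Pl l).erase p, p ^ N * p'' ^ (e p'') := by
            rw [hsplit]; ring
          rw [this]
          exact J.sub_mem h1 h2
        have : p ∈ J.radical := ⟨N + e p, hpow⟩
        rwa [hJrad] at this
  apply le_antisymm
  · -- span P ≤ J, then take radicals
    have hsub : Ideal.span (P : Set R) ≤ J := by
      rw [Ideal.span_le]
      intro p hp
      rw [Finset.mem_coe, ← hunion, Finset.mem_biUnion] at hp
      obtain ⟨l, _, hpl⟩ := hp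
      exact key l l rfl p hpl
    calc (Ideal.span (P : Set R)).radical ≤ J.radical := Ideal.radical_mono hsub
      _ = J := hJrad
  · -- span (range q) ≤ span P
    apply Ideal.radical_mono
    rw [Ideal.span_le]
    rintro _ ⟨l, rfl⟩
    rw [SetLike.mem_coe, hq l]
    apply Ideal.sum_mem
    intro p hp
    have hpP : p ∈ P := hPmem l p hp
    have he' : 1 ≤ e p := he p hpP
    have : p ^ (e p) = p ^ (e p - 1) * p := by
      rw [← pow_succ, Nat.sub_add_cancel he']
    rw [this]
    exact Ideal.mul_mem_left _ _ (Ideal.subset_span (Finset.mem_coe.mpr hpP))
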